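/- Let I be a proper ideal of R = C^∞(M,ℝ) of finite codimension such that the quotient ℝ-algebra R/I has no idempotent elements other than 0 and 1 (for instance, R/I is a Weil algebra, i.e., a direct sum of ℝ and a nilpotent ideal). Then spec(I) consists of exactly one point. -/

import Mathlib

/-!
A point `x ∈ spec I` is the same as an `ℝ`-algebra map `R ⧸ I → ℝ`, whose kernel is a prime ideal
of the finite-dimensional, hence Artinian, algebra `R ⧸ I`.

Existence: the image of a smooth exhaustion function `p` in `R ⧸ I` is algebraic over `ℝ`, so `I`
contains `q ∘ p` for a nonzero polynomial `q`, whose zero set lies in a sublevel set of `p` and is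
therefore compact. If `spec I` were empty, finitely many elements of `I` would have no common zero
on that compact set, and the sum of their squares and of `(q ∘ p)²` would be an invertible element
of `I`.

Uniqueness: two distinct primes of an Artinian ring are separated by an idempotent, which cannot be
`0` or `1`. Distinct points of `spec I` give distinct kernels, since a smooth function separates them.
-/

open scoped Manifold
open Module Filter Topology

noncomputable section

/-- The ℝ-algebra of smooth real-valued functions on a manifold `M` modelled on `ℝ^m`. -/
abbrev SmoothFns (m : ℕ) (M : Type*) [TopologicalSpace M]
    [ChartedSpace (EuclideanSpace ℝ (Fin m)) M] : Type _ :=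
  C^(⊤ : ℕ∞)⟮𝓡 m, M; 𝓘(ℝ, ℝ), ℝ⟯

variable {m : ℕ} {M : Type*} [TopologicalSpace M] [T2Space M] [SecondCountableTopology M]
  [ChartedSpace (EuclideanSpace ℝ (Fin m)) M] [IsManifold (𝓡 m) (⊤ : ℕ∞) M]

/-- The ideal `𝔪ₓ` of smooth functions vanishing at the point `x`. -/
def mIdeal (x : M) : Ideal (SmoothFns m M) where
  carrier := {f | f x = 0}
  add_mem' := by intro f g hf hg; simp_all
  zero_mem' := by simp
  smul_mem' := by intro c f hf; simp_all

/-- The ideal `𝔫ₓ` of smooth functions vanishing on some neighbourhood of the point `x`. -/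
def nIdeal (x : M) : Ideal (SmoothFns m M) where
  carrier := {f | ∀ᶠ y in 𝓝 x, f y = 0}
  add_mem' := by
    intro f g hf hg
    filter_upwards [hf, hg] with y h1 h2
    simp [h1, h2]
  zero_mem' := by filter_upwards with y; simp
  smul_mem' := by
    intro c f hf
    filter_upwards [hf] with y h
    simp [h]

/-- The spectrum of an ideal: the set of common zeros of its elements. -/
def idealSpec (I : Ideal (SmoothFns m M)) : Set M :=
  {x : M | ∀ f ∈ I, f x = 0}

namespace SmoothFns

variable {N : Type*} [TopologicalSpace N] [ChartedSpace (EuclideanSpace ℝ (Fin m)) N]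

def evalAlgHom (x : N) : SmoothFns m N →ₐ[ℝ] ℝ :=
  (Pi.evalAlgHom ℝ (fun _ : N => ℝ) x).comp ContMDiffMap.coeFnAlgHom

@[simp]
lemma evalAlgHom_apply (x : N) (f : SmoothFns m N) : evalAlgHom x f = f x := rfl

lemma isUnit_of_forall_ne_zero {f : SmoothFns m N} (hf : ∀ x, f x ≠ 0) : IsUnit f :=
  IsUnit.of_mul_eq_one ⟨fun x => (f x)⁻¹, f.contMDiff.inv₀ hf⟩ <| by
    ext x
    exact mul_inv_cancel₀ (hf x)

lemma eq_top_of_idealSpec_eq_empty {I : Ideal (SmoothFns m N)} (hspec : idealSpec I = ∅)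
    {F : SmoothFns m N} (hFI : F ∈ I) (hF : IsCompact {x | F x = 0}) : I = ⊤ := by
  have hg : ∀ z, ∃ g ∈ I, g z ≠ 0 := by
    intro z
    by_contra! h
    exact Set.eq_empty_iff_forall_notMem.1 hspec z h
  choose g hgI hgz using hg
  obtain ⟨t, ht⟩ := hF.elim_finite_subcover (fun z => {w | g z w ≠ 0})
    (fun z => isOpen_ne_fun (g z).contMDiff.continuous continuous_const)
    fun z _ => Set.mem_iUnion.2 ⟨z, hgz z⟩
  refine I.eq_top_of_isUnit_mem (x := F * F + ∑ z ∈ t, g z * g z)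
    (I.add_mem (I.mul_mem_left F hFI) (I.sum_mem fun z _ => I.mul_mem_left _ (hgI z)))
    (isUnit_of_forall_ne_zero fun w => ?_)
  rw [← evalAlgHom_apply w]
  simp only [map_add, map_mul, map_sum, evalAlgHom_apply]
  have hsq : ∀ z ∈ t, 0 ≤ g z w * g z w := fun z _ => mul_self_nonneg _
  refine ne_of_gt ?_
  by_cases hFw : F w = 0
  · obtain ⟨z, hzt, hzw⟩ := Set.mem_iUnion₂.1 (ht hFw)
    exact add_pos_of_nonneg_of_pos (mul_self_nonneg _)
      (Finset.sum_pos' hsq ⟨z, hzt, mul_self_pos.2 hzw⟩)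
  · exact add_pos_of_pos_of_nonneg (mul_self_pos.2 hFw) (Finset.sum_nonneg hsq)

end SmoothFns

open SmoothFns

lemma exists_isCompact_setOf_le : ∃ p : SmoothFns m M, ∀ c : ℝ, IsCompact {x | p x ≤ c} := by
  have : LocallyCompactSpace M := ChartedSpace.locallyCompactSpace (EuclideanSpace ℝ (Fin m)) M
  let K := CompactExhaustion.choice M
  -- `K.find` is locally bounded, so it is dominated by a smooth function.
  obtain ⟨p, hp⟩ := exists_contMDiffMap_forall_mem_convex_of_local_const (𝓡 m)
    (t := fun x => Set.Ioi (K.find x : ℝ)) (fun _ => convex_Ioi _) fun x => by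
      refine ⟨K.find x + 2, ?_⟩
      filter_upwards [mem_interior_iff_mem_nhds.1 (K.subset_interior_succ _ (K.mem_find x))]
        with y hy
      have : (K.find y : ℝ) ≤ K.find x + 1 := by exact_mod_cast K.mem_iff_find_le.1 hy
      exact show (K.find y : ℝ) < K.find x + 2 by linarith
  refine ⟨p, fun c => ?_⟩
  obtain ⟨n, hn⟩ := exists_nat_ge c
  refine (K.isCompact n).of_isClosed_subset (isClosed_le p.contMDiff.continuous continuous_const)
    fun x hx => K.mem_iff_find_le.2 ?_
  have : (K.find x : ℝ) < n := (hp x).trans_le (hx.out.trans hn)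
  exact_mod_cast this.le

lemma exists_mem_isCompact_setOf_eq_zero (I : Ideal (SmoothFns m M))
    [FiniteDimensional ℝ (SmoothFns m M ⧸ I)] : ∃ F ∈ I, IsCompact {x | F x = 0} := by
  obtain ⟨p, hp⟩ := exists_isCompact_setOf_le (m := m) (M := M)
  set q := minpoly ℝ (Ideal.Quotient.mkₐ ℝ I p)
  have hq : q ≠ 0 := minpoly.ne_zero (IsIntegral.of_finite ℝ _)
  refine ⟨Polynomial.aeval p q, ?_, ?_⟩
  · rw [← Ideal.Quotient.eq_zero_iff_mem, ← Ideal.Quotient.mkₐ_eq_mk ℝ,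
      ← Polynomial.aeval_algHom_apply]
    exact minpoly.aeval ℝ _
  · obtain ⟨C, hC⟩ := (Polynomial.finite_setOfPred_isRoot hq).bddAbove
    refine (hp C).of_isClosed_subset (isClosed_eq (Polynomial.aeval p q).contMDiff.continuous
      continuous_const) fun x hx => hC ?_
    have : Polynomial.aeval (p x) q = 0 := by
      rw [← evalAlgHom_apply, Polynomial.aeval_algHom_apply]
      exact hx
    rwa [Polynomial.coe_aeval_eq_eval] at this

lemma idealSpec_nonempty {I : Ideal (SmoothFns m M)} (hI : I ≠ ⊤)
    [FiniteDimensional ℝ (SmoothFns m M ⧸ I)] : (idealSpec I).Nonempty := by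
  rw [Set.nonempty_iff_ne_empty]
  intro hspec
  obtain ⟨F, hFI, hF⟩ := exists_mem_isCompact_setOf_eq_zero I
  exact hI (eq_top_of_idealSpec_eq_empty hspec hFI hF)

lemma IsArtinianRing.eq_of_isPrime_of_forall_isIdempotentElem {A : Type*} [CommRing A]
    [IsArtinianRing A] (hA : ∀ e : A, IsIdempotentElem e → e = 0 ∨ e = 1)
    (p q : Ideal A) [p.IsPrime] [hq : q.IsPrime] : p = q := by
  by_contra hpq
  obtain ⟨e, hep, he, heq⟩ := IsArtinianRing.exists_not_mem_forall_mem_of_ne p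
  rcases hA e he with rfl | rfl
  · exact hep p.zero_mem
  · exact hq.ne_top ((Ideal.eq_top_iff_one q).2 (heq q hq (Ne.symm hpq)))

lemma idealSpec_subsingleton (I : Ideal (SmoothFns m M))
    [FiniteDimensional ℝ (SmoothFns m M ⧸ I)]
    (hidem : ∀ e : SmoothFns m M ⧸ I, IsIdempotentElem e → e = 0 ∨ e = 1) :
    (idealSpec I).Subsingleton := by
  intro x hx y hy
  by_contra hxy
  have : IsArtinianRing (SmoothFns m M ⧸ I) := IsArtinianRing.of_finite ℝ _
  have : LocallyCompactSpace M := ChartedSpace.locallyCompactSpace (EuclideanSpace ℝ (Fin m)) M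
  let evalQuot (z : M) (hz : z ∈ idealSpec I) : SmoothFns m M ⧸ I →+* ℝ :=
    Ideal.Quotient.lift I (evalAlgHom z).toRingHom hz
  have := RingHom.ker_isPrime (evalQuot x hx)
  have := RingHom.ker_isPrime (evalQuot y hy)
  have hker := IsArtinianRing.eq_of_isPrime_of_forall_isIdempotentElem hidem
    (RingHom.ker (evalQuot x hx)) (RingHom.ker (evalQuot y hy))
  obtain ⟨e, he0, he1, -⟩ := exists_contMDiffMap_zero_one_of_isClosed (𝓡 m) (n := (⊤ : ℕ∞))
    (isClosed_singleton (x := y)) (isClosed_singleton (x := x))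
    (Set.disjoint_singleton.2 (Ne.symm hxy))
  have : Ideal.Quotient.mk I e ∈ RingHom.ker (evalQuot x hx) := by
    rw [hker, RingHom.mem_ker]
    exact he0 rfl
  exact one_ne_zero ((he1 rfl).symm.trans this)

theorem spec_singleton_of_no_nontrivial_idempotents_general
    (I : Ideal (SmoothFns m M)) (hI : I ≠ ⊤)
    (hfd : FiniteDimensional ℝ (SmoothFns m M ⧸ I))
    (hidem : ∀ e : SmoothFns m M ⧸ I, e * e = e → e = 0 ∨ e = 1) :
    ∃ x : M, idealSpec I = {x} := by
  obtain ⟨x, hx⟩ := idealSpec_nonempty hI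
  exact ⟨x, (idealSpec_subsingleton I hidem).eq_singleton_of_mem hx⟩

/-- If `I` is a proper ideal of `R = C^∞(M,ℝ)` of finite codimension such
that the quotient algebra `R/I` has no idempotents other than `0` and `1`, then `spec I`
consists of exactly one point. -/
theorem spec_singleton_of_no_nontrivial_idempotents
    [Nonempty M] (I : Ideal (SmoothFns m M)) (hI : I ≠ ⊤)
    (hfd : FiniteDimensional ℝ (SmoothFns m M ⧸ I))
    (hidem : ∀ e : SmoothFns m M ⧸ I, e * e = e → e = 0 ∨ e = 1) :
    ∃ x : M, idealSpec I = {x} :=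
  spec_singleton_of_no_nontrivial_idempotents_general I hI hfd hidem
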